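/- Let f : ℝ → ℝ be defined by f(x) = 0 for x > 0 and f(x) = x for x ≤ 0. Then f is continuous, and the only eventually fixed orbit pattern tags admitted by f are the empty word and the single letter L; in particular no tag of length ≥ 2 is admitted. -/
import Mathlib


/-- The alphabet of orbit pattern tags: `L` for a leftward move, `R` for a rightward move. -/
inductive Letter : Type
  | L : Letter
  | R : Letter
deriving DecidableEq

open Letter

/-- A continuous interval map `f` admits the orbit pattern tag `w` if there is an
eventually fixed orbit `x 0, x 1, ..., x w.length` of `f` (the last point being fixed,
all earlier points different from it) whose `j`-th move is labelled by the `j`-th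
letter of `w`: `L` if the orbit moves left, `R` if it moves right. -/
def Admits (f : ℝ → ℝ) (w : List Letter) : Prop :=
  ∃ x : ℕ → ℝ,
    (∀ j < w.length, f (x j) = x (j + 1)) ∧
    f (x w.length) = x w.length ∧
    (∀ j < w.length, x j ≠ x w.length) ∧
    (∀ j : Fin w.length,
      (w.get j = L ∧ x ((j : ℕ) + 1) < x (j : ℕ)) ∨
      (w.get j = R ∧ x (j : ℕ) < x ((j : ℕ) + 1)))

/-- One step of reduction on words: replace an adjacent `LL` by `L`, an adjacent `RR`
by `R`, or delete an adjacent `LR` or `RL`. -/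
inductive Red : List Letter → List Letter → Prop
  | ll (v v' : List Letter) : Red (v ++ [L, L] ++ v') (v ++ [L] ++ v')
  | rr (v v' : List Letter) : Red (v ++ [R, R] ++ v') (v ++ [R] ++ v')
  | lr (v v' : List Letter) : Red (v ++ [L, R] ++ v') (v ++ v')
  | rl (v v' : List Letter) : Red (v ++ [R, L] ++ v') (v ++ v')

/-- One derivation step: a reduction, or tail formation (passing to a suffix). -/
inductive Step : List Letter → List Letter → Prop
  | red {w u : List Letter} : Red w u → Step w u
  | tail {w u : List Letter} : u <:+ w → Step w u

/-- `u` is obtained from `w` by finitely many reductions. -/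
def Reducible : List Letter → List Letter → Prop := Relation.ReflTransGen Red

/-- `u` is derivable from `w`: finitely many reductions and tail formations, in any order. -/
def Derivable : List Letter → List Letter → Prop := Relation.ReflTransGen Step

/-- the map x ↦ 0 for x > 0, x ↦ x for x ≤ 0, is continuous and admits
only the empty tag and the tag L; no tag of length ≥ 2 is admitted. -/
theorem stmt6 (f : ℝ → ℝ) (hf : ∀ x : ℝ, f x = if 0 < x then 0 else x) :
    Continuous f ∧
    (∀ w : List Letter, Admits f w → w = [] ∨ w = [Letter.L]) ∧
    (∀ w : List Letter, 2 ≤ w.length → ¬ Admits f w) := by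
  have hff : ∀ y : ℝ, f (f y) = f y := by
    intro y
    rw [hf y, hf]
    split_ifs <;> linarith
  have key : ∀ w : List Letter, 2 ≤ w.length → ¬ Admits f w := by
    rintro w hw ⟨x, h1, h2, h3, h4⟩
    have hx1 : ∀ j, 1 ≤ j → j ≤ w.length → x j = x 1 := by
      intro j hj1 hj2
      induction j with
      | zero => omega
      | succ k ih =>
        rcases Nat.lt_or_ge k 1 with hk | hk
        · have : k = 0 := by omega
          subst this; rfl
        · have hik := ih hk (by omega)
          have hfk : f (x k) = x (k + 1) := h1 k (by omega)
          rw [hik] at hfk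
          have h0 : f (x 0) = x 1 := h1 0 (by omega)
          rw [← h0, hff, h0] at hfk
          exact hfk.symm
    exact (h3 1 (by omega)) (hx1 w.length (by omega) le_rfl).symm
  refine ⟨?_, ?_, key⟩
  · have : f = fun x => min x 0 := by
      funext x
      rw [hf]
      split_ifs with h
      · exact (min_eq_right h.le).symm
      · exact (min_eq_left (not_lt.1 h)).symm
    rw [this]
    exact continuous_id.min continuous_const
  · intro w hA
    match w with
    | [] => exact Or.inl rfl
    | [a] =>
      right
      obtain ⟨x, h1, h2, h3, h4⟩ := hA
      have hne : x 0 ≠ x 1 := h3 0 (by simp)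
      have hfx : f (x 0) = x 1 := h1 0 (by simp)
      rw [hf] at hfx
      split_ifs at hfx with h
      · rcases h4 ⟨0, by simp⟩ with ⟨hL, _⟩ | ⟨_, hlt⟩
        · simpa using hL ▸ rfl
        · simp only [List.get] at hlt ⊢
          linarith
      · exact absurd hfx hne
    | a :: b :: t =>
      exact absurd hA (key _ (by simp))
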